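/- Define ℚ-linear maps exp_H and log_H on the free ℚ-module with basis the nonempty integer lists by exp_H(w) := Σ_{I=(i₁,…,i_k) ∈ Comp(n)} (1/(i₁!⋯i_k!)) · I[w] and log_H(w) := Σ_{I=(i₁,…,i_k) ∈ Comp(n)} ((−1)^{n−k}/(i₁⋯i_k)) · I[w], for w a list of length n, where Comp(n) is the set of compositions of n. Then log_H maps the ℚ-span N of nonsingular lists onto itself, log_H(N) = N, and likewise exp_H(N) = N. -/
import Mathlib


/-- A nonempty list of integers `(k₁, …, kₙ)` is nonsingular if `k₁ ≠ 1`,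
`k₁ + k₂ ∉ {2, 1, 0, −2, −4, …}` (when `n ≥ 2`), and `k₁ + ⋯ + k_j > j` for all
`3 ≤ j ≤ n`; these are the integer points outside the singular set of the
meromorphically continued multiple zeta function. -/
def NonSingular (w : List ℤ) : Prop :=
  w ≠ [] ∧
  (w.take 1).sum ≠ 1 ∧
  (2 ≤ w.length →
    (w.take 2).sum ≠ 2 ∧ (w.take 2).sum ≠ 1 ∧
    ¬((w.take 2).sum ≤ 0 ∧ Even ((w.take 2).sum))) ∧
  ∀ j : ℕ, 3 ≤ j → j ≤ w.length → (j : ℤ) < (w.take j).sum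

/-- The contraction `I[w]` of a list `w` of integers along a composition
`I = (i₁, …, iₘ)`: the list of the `m` consecutive block sums of `w` along `I`. -/
def contractWord : List ℕ → List ℤ → List ℤ
  | [], _ => []
  | i :: I, w => (w.take i).sum :: contractWord I (w.drop i)

/-- Hoffman's exponential on a basis word `w` of length `n`:
`exp_H(w) = Σ_{I=(i₁,…,i_k) ∈ Comp(n)} (1 / (i₁! ⋯ i_k!)) · I[w]`. -/
noncomputable def expHWord (w : List ℤ) : List ℤ →₀ ℚ :=
  ∑ I : Composition w.length,
    (((I.blocks.map Nat.factorial).prod : ℚ))⁻¹ • Finsupp.single (contractWord I.blocks w) 1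

/-- Hoffman's logarithm on a basis word `w` of length `n`:
`log_H(w) = Σ_{I=(i₁,…,i_k) ∈ Comp(n)} ((−1)^{n−k} / (i₁ ⋯ i_k)) · I[w]`. -/
noncomputable def logHWord (w : List ℤ) : List ℤ →₀ ℚ :=
  ∑ I : Composition w.length,
    ((-1 : ℚ) ^ (w.length - I.blocks.length) / (I.blocks.prod : ℚ)) •
      Finsupp.single (contractWord I.blocks w) 1

/-- Hoffman's exponential, extended `ℚ`-linearly to the free `ℚ`-module on words. -/
noncomputable def expH : (List ℤ →₀ ℚ) →ₗ[ℚ] (List ℤ →₀ ℚ) :=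
  Finsupp.lift (List ℤ →₀ ℚ) ℚ (List ℤ) expHWord

/-- Hoffman's logarithm, extended `ℚ`-linearly to the free `ℚ`-module on words. -/
noncomputable def logH : (List ℤ →₀ ℚ) →ₗ[ℚ] (List ℤ →₀ ℚ) :=
  Finsupp.lift (List ℤ →₀ ℚ) ℚ (List ℤ) logHWord

/-- The `ℚ`-span `N` of the nonsingular words. -/
noncomputable def nonSingularSpan : Submodule ℚ (List ℤ →₀ ℚ) :=
  Submodule.span ℚ {f | ∃ w : List ℤ, NonSingular w ∧ f = Finsupp.single w 1}

lemma contractWord_length (bs : List ℕ) (w : List ℤ) :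
    (contractWord bs w).length = bs.length := by
  induction bs generalizing w with
  | nil => rfl
  | cons i bs ih => simp [contractWord, ih]

lemma contractWord_take_sum (bs : List ℕ) (w : List ℤ) (j : ℕ) :
    ((contractWord bs w).take j).sum = (w.take ((bs.take j).sum)).sum := by
  induction bs generalizing w j with
  | nil => simp [contractWord]
  | cons i bs ih =>
    cases j with
    | zero => simp
    | succ j =>
      simp only [contractWord, List.take_succ_cons, List.sum_cons, ih, List.take_add,
        List.sum_append]

lemma take_sum_le_sum (bs : List ℕ) (j : ℕ) : (bs.take j).sum ≤ bs.sum := by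
  conv_rhs => rw [← List.take_append_drop j bs]
  rw [List.sum_append]
  exact Nat.le_add_right _ _

lemma le_take_sum (bs : List ℕ) (hb : ∀ b ∈ bs, 1 ≤ b) (j : ℕ) (hj : j ≤ bs.length) :
    j ≤ (bs.take j).sum := by
  calc j = (bs.take j).length := by simp [hj]
  _ ≤ (bs.take j).sum := List.length_le_sum_of_one_le _ (fun b hbm => hb b (List.mem_of_mem_take hbm))

lemma contractWord_replicate (w : List ℤ) :
    contractWord (List.replicate w.length 1) w = w := by
  induction w with
  | nil => rfl
  | cons a w ih => simp [contractWord, List.replicate_succ, ih]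

lemma nonSingular_contract (w : List ℤ) (hw : NonSingular w) (I : Composition w.length) :
    NonSingular (contractWord I.blocks w) := by
  obtain ⟨h0, h1, h2, h3⟩ := hw
  have hn : 0 < w.length := List.length_pos_iff.2 h0
  have hbpos : ∀ b ∈ I.blocks, 1 ≤ b := fun b hb => I.one_le_blocks hb
  have hsum : I.blocks.sum = w.length := I.blocks_sum
  have hlen : (contractWord I.blocks w).length = I.length := contractWord_length _ _
  have key : ∀ j : ℕ, j ≤ I.length →
      j ≤ (I.blocks.take j).sum ∧ (I.blocks.take j).sum ≤ w.length ∧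
      ((contractWord I.blocks w).take j).sum = (w.take ((I.blocks.take j).sum)).sum := by
    intro j hj
    refine ⟨le_take_sum _ hbpos j hj, ?_, contractWord_take_sum _ _ _⟩
    exact le_trans (take_sum_le_sum _ _) (le_of_eq hsum)
  have big : ∀ t : ℕ, 3 ≤ t → t ≤ w.length → (t : ℤ) < (w.take t).sum := fun t h3t htn => h3 t h3t htn
  have hIpos : 0 < I.length := I.length_pos_of_pos hn
  refine ⟨?_, ?_, ?_, ?_⟩
  · intro hnil
    rw [hnil] at hlen
    simp at hlen
    omega
  · obtain ⟨hle, hle2, heq⟩ := key 1 hIpos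
    rw [heq]
    set t := (I.blocks.take 1).sum with ht
    rcases Nat.lt_or_ge t 3 with h | h
    · interval_cases t
      · exact h1
      · exact (h2 hle2).2.1
    · have := big _ h hle2
      omega
  · intro h2v
    rw [hlen] at h2v
    obtain ⟨hle, hle2, heq⟩ := key 2 h2v
    rw [heq]
    set t := (I.blocks.take 2).sum with ht
    rcases eq_or_lt_of_le hle with h | h
    · rw [← h]
      exact h2 (by omega)
    · have hb := big t (by omega) hle2
      refine ⟨by omega, by omega, ?_⟩
      rintro ⟨hle0, -⟩
      omega
  · intro j hj3 hjl
    rw [hlen] at hjl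
    obtain ⟨hle, hle2, heq⟩ := key j hjl
    rw [heq]
    have hb := big _ (by omega) hle2
    have : (j : ℤ) ≤ ((I.blocks.take j).sum : ℤ) := by exact_mod_cast hle
    omega

lemma map_lift_eq' (F : List ℤ → (List ℤ →₀ ℚ))
    (c : (n : ℕ) → Composition n → ℚ)
    (hF : ∀ w : List ℤ, F w = ∑ I : Composition w.length,
        c w.length I • Finsupp.single (contractWord I.blocks w) 1)
    (hc : ∀ n, c n (Composition.ones n) = 1) :
    Submodule.map (Finsupp.lift (List ℤ →₀ ℚ) ℚ (List ℤ) F) nonSingularSpan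
      = nonSingularSpan := by
  classical
  have key : ∀ v : List ℤ,
      Finsupp.lift (List ℤ →₀ ℚ) ℚ (List ℤ) F (Finsupp.single v 1) = F v := by
    intro v; simp
  have hFmem : ∀ w : List ℤ, NonSingular w → F w ∈ nonSingularSpan := by
    intro w hw
    rw [hF]
    refine Submodule.sum_mem _ fun I _ => Submodule.smul_mem _ _ ?_
    exact Submodule.subset_span ⟨_, nonSingular_contract w hw I, rfl⟩
  apply le_antisymm
  · rw [nonSingularSpan, Submodule.map_span, Submodule.span_le]
    rintro _ ⟨f, ⟨w, hw, rfl⟩, rfl⟩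
    rw [key]
    exact hFmem w hw
  · have main : ∀ n : ℕ, ∀ w : List ℤ, w.length = n → NonSingular w →
        Finsupp.single w 1 ∈ Submodule.map
          (Finsupp.lift (List ℤ →₀ ℚ) ℚ (List ℤ) F) nonSingularSpan := by
      intro n
      induction n using Nat.strong_induction_on with
      | _ n ih =>
        intro w hlen hw
        subst hlen
        have hws : Finsupp.single w (1:ℚ) ∈ nonSingularSpan :=
          Submodule.subset_span ⟨w, hw, rfl⟩
        have hG : F w ∈ Submodule.map (Finsupp.lift (List ℤ →₀ ℚ) ℚ (List ℤ) F)
            nonSingularSpan := ⟨_, hws, key w⟩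
        have hones : (c w.length (Composition.ones w.length) •
            Finsupp.single (contractWord (Composition.ones w.length).blocks w) (1:ℚ))
              = Finsupp.single w 1 := by
          rw [hc, Composition.ones_blocks, contractWord_replicate, one_smul]
        have hsplit : Finsupp.single w (1:ℚ) = F w -
            ∑ I ∈ Finset.univ.erase (Composition.ones w.length),
              c w.length I • Finsupp.single (contractWord I.blocks w) 1 := by
          rw [hF, ← Finset.add_sum_erase _ _ (Finset.mem_univ (Composition.ones w.length)),
            hones]
          abel
        rw [hsplit]
        refine Submodule.sub_mem _ hG (Submodule.sum_mem _ fun I hI => ?_)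
        refine Submodule.smul_mem _ _ ?_
        have hne : I ≠ Composition.ones w.length := (Finset.mem_erase.1 hI).1
        have hlt : I.length < w.length :=
          lt_of_le_of_ne I.length_le (fun h => hne (Composition.eq_ones_iff_length.2 h))
        exact ih I.length hlt _ (contractWord_length _ _) (nonSingular_contract w hw I)
    rw [nonSingularSpan, Submodule.span_le]
    rintro _ ⟨w, hw, rfl⟩
    exact main w.length w rfl hw

/-- Hoffman's logarithm `log_H` maps the `ℚ`-span `N` of nonsingular
words onto itself, `log_H(N) = N`, and likewise `exp_H(N) = N`. -/
theorem logH_expH_map_nonSingularSpan :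
    Submodule.map logH nonSingularSpan = nonSingularSpan ∧
    Submodule.map expH nonSingularSpan = nonSingularSpan := by
  constructor
  · exact map_lift_eq' logHWord
      (fun n I => (-1 : ℚ) ^ (n - I.blocks.length) / (I.blocks.prod : ℚ))
      (fun w => rfl)
      (fun n => by simp [Composition.ones_blocks])
  · exact map_lift_eq' expHWord
      (fun n I => (((I.blocks.map Nat.factorial).prod : ℚ))⁻¹)
      (fun w => rfl)
      (fun n => by simp [Composition.ones_blocks])
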